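/- Let R be a commutative ring with 2 invertible, V = R^{n+1} with e, e*, e*e = 1, and τ ∈ Mat_{n+1}(R) stable. If x ∈ End(V) commutes with τ and x is not a scalar (x ∉ R·1), then the commutator [x, 1_H] does not lie in M_H(R) + M_τ(R), where 1_H = 1 − ee*, M_H(R) consists of endomorphisms preserving the decomposition and killing e (i.e., of the form 1_H m 1_H), and M_τ(R) is the centralizer of τ. -/

import Mathlib

/-!
Put `c = e* x e` and `y = x - c`. Then `[x, 1_H] = [y, 1_H]`, which sends `e` to `-y e` and is
sent by `e*` to `e* y`. If `[x, 1_H] = m + t` with `m ∈ M_H(R)` and `t ∈ M_τ(R)`, then `t` and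
`-y` commute with `τ` and agree on the cyclic vector `e`, so `t = -y`. Hence
`e* y = e* t = -e* y`, so `e* y = 0` because `2` is invertible, and as `e*` is cocyclic, `y = 0`.
-/

section MatGGP

variable {S : Type*} [CommRing S] {m : ℕ}

/-- `v` is a cyclic vector for the matrix `τ`: `S[τ] v` is everything. -/
def MatCyclicVec (τ : Matrix (Fin m) (Fin m) S) (v : Fin m → S) : Prop :=
  ∀ w : Fin m → S, ∃ p : Polynomial S, (Polynomial.aeval τ p).mulVec v = w

/-- `ℓ` is a cyclic covector for the matrix `τ`: `ℓ S[τ]` is everything. -/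
def MatCoCyclicVec (τ : Matrix (Fin m) (Fin m) S) (ℓ : Fin m → S) : Prop :=
  ∀ w : Fin m → S, ∃ p : Polynomial S, Matrix.vecMul ℓ (Polynomial.aeval τ p) = w

/-- `τ` is stable with respect to `(e, e*)`: both `e` and `e*` are `τ`-cyclic. -/
def MatStable (τ : Matrix (Fin m) (Fin m) S) (e eStar : Fin m → S) : Prop :=
  MatCyclicVec τ e ∧ MatCoCyclicVec τ eStar

/-- The projection matrix `1_H = 1 - e e*`. -/
def oneHMat (e eStar : Fin m → S) : Matrix (Fin m) (Fin m) S :=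
  1 - Matrix.vecMulVec e eStar

/-- The compression `τ_H = 1_H τ 1_H`. -/
def tauHMat (τ : Matrix (Fin m) (Fin m) S) (e eStar : Fin m → S) :
    Matrix (Fin m) (Fin m) S :=
  oneHMat e eStar * τ * oneHMat e eStar

/-- Membership in `H(S)`: an invertible matrix fixing `e` and `e*`. -/
def MemH (e eStar : Fin m → S) (g : Matrix (Fin m) (Fin m) S) : Prop :=
  IsUnit g ∧ g.mulVec e = e ∧ Matrix.vecMul eStar g = eStar

/-- Membership in the product set `H(S) · G_τ(S)`. -/
def MemHGt (τ : Matrix (Fin m) (Fin m) S) (e eStar : Fin m → S)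
    (a : Matrix (Fin m) (Fin m) S) : Prop :=
  ∃ h b : Matrix (Fin m) (Fin m) S,
    MemH e eStar h ∧ IsUnit b ∧ b * τ = τ * b ∧ a = h * b

/-- Membership in `H_{τ_H}(S)`: an element of `H(S)` commuting with the compression `τ_H`. -/
def MemHtauH (τ : Matrix (Fin m) (Fin m) S) (e eStar : Fin m → S)
    (y : Matrix (Fin m) (Fin m) S) : Prop :=
  MemH e eStar y ∧ y * tauHMat τ e eStar = tauHMat τ e eStar * y

end MatGGP

open Matrix Polynomial

theorem Commute.aeval_right {S A : Type*} [CommSemiring S] [Semiring A] [Algebra S A] {a b : A}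
    (h : Commute a b) (p : S[X]) : Commute a (aeval b p) :=
  Algebra.commute_of_mem_adjoin_singleton_of_commute (aeval_mem_adjoin_singleton S b) h

section

variable {S : Type*} [CommRing S] {m : ℕ}

theorem MatCyclicVec.ext_of_commute {τ a b : Matrix (Fin m) (Fin m) S} {v : Fin m → S}
    (hv : MatCyclicVec τ v) (ha : Commute a τ) (hb : Commute b τ) (h : a *ᵥ v = b *ᵥ v) :
    a = b := by
  refine ext_iff_mulVec.2 fun w => ?_
  obtain ⟨p, rfl⟩ := hv w
  rw [mulVec_mulVec, mulVec_mulVec, (ha.aeval_right p).eq, (hb.aeval_right p).eq,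
    ← mulVec_mulVec, ← mulVec_mulVec, h]

theorem MatCoCyclicVec.ext_of_commute {τ a b : Matrix (Fin m) (Fin m) S} {ℓ : Fin m → S}
    (hℓ : MatCoCyclicVec τ ℓ) (ha : Commute a τ) (hb : Commute b τ) (h : ℓ ᵥ* a = ℓ ᵥ* b) :
    a = b := by
  refine ext_iff_vecMul.2 fun w => ?_
  obtain ⟨p, rfl⟩ := hℓ w
  rw [vecMul_vecMul, vecMul_vecMul, ← (ha.aeval_right p).eq, ← (hb.aeval_right p).eq,
    ← vecMul_vecMul, ← vecMul_vecMul, h]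

theorem oneHMat_mulVec (e eStar v : Fin m → S) :
    oneHMat e eStar *ᵥ v = v - (eStar ⬝ᵥ v) • e := by
  simp [oneHMat, sub_mulVec, vecMulVec_mulVec]

theorem vecMul_oneHMat (e eStar w : Fin m → S) :
    w ᵥ* oneHMat e eStar = w - (w ⬝ᵥ e) • eStar := by
  simp [oneHMat, vecMul_sub, vecMul_vecMulVec]

variable {e eStar : Fin m → S}

theorem commutator_oneHMat_mulVec (he : eStar ⬝ᵥ e = 1) (x : Matrix (Fin m) (Fin m) S) :
    (x * oneHMat e eStar - oneHMat e eStar * x) *ᵥ e = -((x - (eStar ⬝ᵥ x *ᵥ e) • 1) *ᵥ e) := by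
  simp [sub_mulVec, ← mulVec_mulVec, oneHMat_mulVec, he, smul_mulVec]

theorem vecMul_commutator_oneHMat (he : eStar ⬝ᵥ e = 1) (x : Matrix (Fin m) (Fin m) S) :
    eStar ᵥ* (x * oneHMat e eStar - oneHMat e eStar * x) =
      eStar ᵥ* (x - (eStar ⬝ᵥ x *ᵥ e) • 1) := by
  simp [vecMul_sub, ← vecMul_vecMul, vecMul_oneHMat, he, dotProduct_mulVec, vecMul_smul]

end

/-- Let `R` be a commutative ring with `2` invertible and `τ ∈ Mat_{n+1}(R)` stable.  If `x`
commutes with `τ` and is not scalar, then the commutator `[x, 1_H]` does not lie in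
`M_H(R) + M_τ(R)`, where `M_H(R)` consists of the operators killing `e` and `e*` (i.e. of the
form `1_H m 1_H`) and `M_τ(R)` is the centralizer of `τ`. -/
theorem stmt_13 {R : Type*} [CommRing R] (n : ℕ) (h2 : IsUnit (2 : R))
    (e eStar : Fin (n + 1) → R) (he : dotProduct eStar e = 1)
    (τ : Matrix (Fin (n + 1)) (Fin (n + 1)) R) (hτ : MatStable τ e eStar)
    (x : Matrix (Fin (n + 1)) (Fin (n + 1)) R) (hx : x * τ = τ * x)
    (hxns : ¬ ∃ c : R, x = c • (1 : Matrix (Fin (n + 1)) (Fin (n + 1)) R)) :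
    ¬ ∃ mh t : Matrix (Fin (n + 1)) (Fin (n + 1)) R,
      mh.mulVec e = 0 ∧ Matrix.vecMul eStar mh = 0 ∧ t * τ = τ * t ∧
      x * oneHMat e eStar - oneHMat e eStar * x = mh + t := by
  rintro ⟨mh, t, hmh, hmh', ht, hcomm⟩
  set y := x - (eStar ⬝ᵥ x *ᵥ e) • (1 : Matrix (Fin (n + 1)) (Fin (n + 1)) R)
  have hy : Commute y τ := Commute.sub_left hx ((Commute.one_left τ).smul_left _)
  have hty : t = -y := by
    refine hτ.1.ext_of_commute ht hy.neg_left ?_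
    have := congrArg (· *ᵥ e) hcomm
    simpa [add_mulVec, hmh, commutator_oneHMat_mulVec he, neg_mulVec] using this.symm
  have hy_eStar : eStar ᵥ* y = 0 := by
    have := congrArg (eStar ᵥ* ·) hcomm
    simp only [vecMul_commutator_oneHMat he, vecMul_add, hmh', zero_add, hty, vecMul_neg] at this
    rw [← h2.smul_eq_zero, two_smul]
    exact add_eq_zero_iff_eq_neg.2 this
  have hy0 : y = 0 :=
    hτ.2.ext_of_commute hy (Commute.zero_left τ) (by rw [hy_eStar, vecMul_zero])
  exact hxns ⟨_, sub_eq_zero.1 hy0⟩
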